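/- Let F be a filter on ℕ with F ≤ Filter.cofinite and F.NeBot (representing a nontrivial admissible ideal I on ℕ), let E ⊆ ℝ and f : ℝ → ℝ. If f is I-ward continuous on E (for every sequence x : ℕ → ℝ of points of E, if Tendsto (fun n => x (n+1) − x n) F (𝓝 0) then Tendsto (fun n => f (x (n+1)) − f (x n)) F (𝓝 0)), then f is I-sequentially continuous on E: for every x₀ ∈ E and every sequence x of points of E with Tendsto x F (𝓝 x₀), one has Tendsto (f ∘ x) F (𝓝 (f x₀)). -/

import Mathlib

/-!
If `f ∘ x` does not tend to `f x₀` along `F`, then, since `x → x₀` along `F`, one can pick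
indices `m k` such that `x (m k) → x₀` in the ordinary sense while `f (x (m k))` stays outside a
fixed neighbourhood of `f x₀`. Interleaving the `x (m k)` with `x₀` gives a sequence of points of
`E` converging to `x₀`, hence quasi-Cauchy along `atTop = cofinite`, hence along `F ≤ cofinite`.
Every consecutive difference of its image under `f` is some `f (x (m k)) - f x₀` up to sign, so
it is bounded away from `0`, contradicting ward continuity.
-/

open Filter Topology

def interleave {α : Type*} (y : ℕ → α) (c : α) (n : ℕ) : α :=
  if Even n then y (n / 2) else c

section Interleave

variable {α β : Type*}

theorem interleave_mem {y : ℕ → α} {c : α} {s : Set α} (hy : ∀ k, y k ∈ s) (hc : c ∈ s)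
    (n : ℕ) : interleave y c n ∈ s := by
  unfold interleave
  split_ifs
  exacts [hy _, hc]

theorem apply_interleave (y : ℕ → α) (c : α) (g : α → β) (n : ℕ) :
    g (interleave y c n) = interleave (g ∘ y) (g c) n := by
  unfold interleave
  split_ifs <;> rfl

theorem exists_dist_interleave_succ_eq [PseudoMetricSpace α] (y : ℕ → α) (c : α) (n : ℕ) :
    ∃ k, dist (interleave y c (n + 1)) (interleave y c n) = dist (y k) c := by
  rcases Nat.even_or_odd n with hn | hn
  · exact ⟨n / 2, by simp [interleave, hn, Nat.even_add_one, dist_comm]⟩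
  · exact ⟨(n + 1) / 2, by simp [interleave, hn.add_one, Nat.not_even_iff_odd.mpr hn]⟩

theorem tendsto_interleave [TopologicalSpace α] {y : ℕ → α} {c : α}
    (hy : Tendsto y atTop (𝓝 c)) : Tendsto (interleave y c) atTop (𝓝 c) := by
  have hhalf : Tendsto (· / 2) atTop atTop := Nat.tendsto_div_const_atTop two_ne_zero
  refine fun U hU => (hhalf.eventually (hy hU)).mono fun n hn => ?_
  unfold interleave
  split_ifs
  exacts [hn, mem_of_mem_nhds hU]

end Interleave

theorem tendsto_sub_succ_nhds_zero {G : Type*} [AddGroup G] [TopologicalSpace G]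
    [IsTopologicalAddGroup G] {z : ℕ → G} {c : G} (hz : Tendsto z atTop (𝓝 c)) :
    Tendsto (fun n => z (n + 1) - z n) atTop (𝓝 0) := by
  simpa using (hz.comp (tendsto_add_atTop_nat 1)).sub hz

theorem exists_seq_tendsto_forall_notMem_of_not_tendsto {ι X Y : Type*} [TopologicalSpace X]
    [FrechetUrysohnSpace X] [TopologicalSpace Y] {F : Filter ι} {x : ι → X} {x₀ : X}
    {f : X → Y} (hx : Tendsto x F (𝓝 x₀)) (hfx : ¬Tendsto (f ∘ x) F (𝓝 (f x₀))) :
    ∃ V ∈ 𝓝 (f x₀), ∃ m : ℕ → ι, Tendsto (x ∘ m) atTop (𝓝 x₀) ∧ ∀ k, f (x (m k)) ∉ V := by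
  obtain ⟨V, hV, hfreq⟩ := not_tendsto_iff_exists_frequently_notMem.mp hfx
  have hclosure : x₀ ∈ closure (x '' {i | f (x i) ∉ V}) :=
    mem_closure_of_frequently_of_tendsto (hfreq.mono fun i hi => ⟨i, hi, rfl⟩) hx
  obtain ⟨y, hy, hyx₀⟩ := mem_closure_iff_seq_limit.mp hclosure
  choose m hmV hm using hy
  refine ⟨V, hV, m, ?_, hmV⟩
  simpa [Function.comp_def, hm] using hyx₀

theorem ideal_ward_continuous_implies_ideal_seq_continuous (F : Filter ℕ)
    (hF : F ≤ Filter.cofinite) [F.NeBot] (E : Set ℝ) (f : ℝ → ℝ)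
    (h : ∀ x : ℕ → ℝ, (∀ n, x n ∈ E) →
      Tendsto (fun n => x (n + 1) - x n) F (𝓝 0) →
      Tendsto (fun n => f (x (n + 1)) - f (x n)) F (𝓝 0)) :
    ∀ x₀ ∈ E, ∀ x : ℕ → ℝ, (∀ n, x n ∈ E) → Tendsto x F (𝓝 x₀) →
      Tendsto (f ∘ x) F (𝓝 (f x₀)) := by
  intro x₀ hx₀ x hxE hx
  by_contra hfx
  obtain ⟨V, hV, m, hxm, hmV⟩ := exists_seq_tendsto_forall_notMem_of_not_tendsto hx hfx
  obtain ⟨ε, hε, hballV⟩ := Metric.mem_nhds_iff.mp hV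
  set z := interleave (x ∘ m) x₀
  have hzE : ∀ n, z n ∈ E := interleave_mem (fun k => hxE (m k)) hx₀
  have hz : Tendsto (fun n => z (n + 1) - z n) F (𝓝 0) :=
    (tendsto_sub_succ_nhds_zero (tendsto_interleave hxm)).mono_left
      (hF.trans Nat.cofinite_eq_atTop.le)
  obtain ⟨n, hn⟩ := (Metric.tendsto_nhds.mp (h z hzE hz) ε hε).exists
  obtain ⟨k, hk⟩ := exists_dist_interleave_succ_eq (f ∘ x ∘ m) (f x₀) n
  rw [← apply_interleave, ← apply_interleave] at hk
  rw [dist_zero_right, ← dist_eq_norm, hk] at hn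
  exact hmV k (hballV (Metric.mem_ball.mpr hn))
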